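/- Let 2 < p < ∞ be real and let r satisfy 1/r = 1/2 + 1/p. Let X be a Banach lattice and let (x_n)_{n∈ℕ} be a sequence in X that is equivalent to the canonical basis of ℓ_p, i.e., there are constants c, C > 0 such that c (∑_{i=1}^m |λ_i|^p)^{1/p} ≤ ‖∑_{i=1}^m λ_i x_i‖ ≤ C (∑_{i=1}^m |λ_i|^p)^{1/p} for all m and all real scalars λ_1, …, λ_m. Then the sequence (|x_n|) satisfies an upper ℓ_r-estimate: there is a constant K > 0 such that ‖∑_{i=1}^m λ_i |x_i|‖ ≤ K (∑_{i=1}^m |λ_i|^r)^{1/r} for all m and all real scalars λ_1, …, λ_m. -/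

import Mathlib

/-!
Write `|λᵢ| = βᵢ μᵢ` with `βᵢ = |λᵢ| ^ (r / 2)` and `μᵢ = |λᵢ| ^ (r / p)`. For real `tᵢ`,
Cauchy–Schwarz and Khintchine's inequality (with constant `√3`, from the fourth moment of
Rademacher sums) give `∑ᵢ |λᵢ tᵢ| ≤ (√3 ‖β‖₂ / 2 ^ m) ∑_ε |∑ⱼ εⱼ μⱼ tⱼ|`, the outer sum running
over all sign vectors `ε`. By finite-dimensional duality every signed functional
`t ↦ ∑ᵢ ±λᵢ tᵢ` is then a combination of the functionals `t ↦ ∑ⱼ εⱼ μⱼ tⱼ` with coefficients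
of modulus at most `√3 ‖β‖₂ / 2 ^ m`, so the same inequality holds in the lattice with `tᵢ`
replaced by `xᵢ`. Taking norms, the upper `ℓ_p`-estimate bounds each `‖∑ⱼ εⱼ μⱼ xⱼ‖` by
`C ‖μ‖_p`, and `‖β‖₂ ‖μ‖_p = ‖λ‖_r`.
-/

open Finset

noncomputable def boolSign (b : Bool) : ℝ := cond b 1 (-1)

@[simp] lemma boolSign_true : boolSign true = 1 := rfl

@[simp] lemma boolSign_false : boolSign false = -1 := rfl

lemma abs_boolSign (b : Bool) : |boolSign b| = 1 := by
  cases b <;> simp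

lemma boolSign_smul {M : Type*} [AddCommGroup M] [Module ℝ M] (b : Bool) (y : M) :
    boolSign b • y = if b then y else -y := by
  cases b <;> simp

noncomputable def rademacherSum {m : ℕ} (ε : Fin m → Bool) (a : Fin m → ℝ) : ℝ :=
  ∑ j, boolSign (ε j) * a j

lemma rademacherSum_cons {m : ℕ} (b : Bool) (ε : Fin m → Bool) (a : Fin (m + 1) → ℝ) :
    rademacherSum (Fin.cons b ε) a = boolSign b * a 0 + rademacherSum ε (Fin.tail a) := by
  simp [rademacherSum, Fin.sum_univ_succ, Fin.tail]

lemma sum_signs_succ {M : Type*} [AddCommMonoid M] {m : ℕ}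
    (f : (Fin (m + 1) → Bool) → M) :
    ∑ ε, f ε = ∑ ε : Fin m → Bool, (f (Fin.cons true ε) + f (Fin.cons false ε)) := by
  rw [← (Fin.consEquiv fun _ => Bool).sum_comp, Fintype.sum_prod_type, Fintype.sum_bool,
    ← sum_add_distrib]
  rfl

lemma sum_rademacherSum_succ {m : ℕ} (g : ℝ → ℝ) (a : Fin (m + 1) → ℝ) :
    ∑ ε, g (rademacherSum ε a) = ∑ ε, (g (a 0 + rademacherSum ε (Fin.tail a))
      + g (-a 0 + rademacherSum ε (Fin.tail a))) := by
  simp [sum_signs_succ, rademacherSum_cons]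

lemma sum_rademacherSum_sq (m : ℕ) (a : Fin m → ℝ) :
    ∑ ε, rademacherSum ε a ^ 2 = 2 ^ m * ∑ j, a j ^ 2 := by
  induction m with
  | zero => simp [rademacherSum]
  | succ m ih =>
    have hpair (s : ℝ) : (a 0 + s) ^ 2 + (-a 0 + s) ^ 2 = 2 * a 0 ^ 2 + 2 * s ^ 2 := by ring
    simp only [sum_rademacherSum_succ (· ^ 2), hpair, sum_add_distrib, ← mul_sum, sum_const,
      ih, card_univ, Fintype.card_fun, Fintype.card_bool, Fintype.card_fin, nsmul_eq_mul,
      Fin.sum_univ_succ (fun j => a j ^ 2), Fin.tail]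
    push_cast
    ring

lemma sum_rademacherSum_pow_four (m : ℕ) (a : Fin m → ℝ) :
    ∑ ε, rademacherSum ε a ^ 4
      = 3 * 2 ^ m * (∑ j, a j ^ 2) ^ 2 - 2 * 2 ^ m * ∑ j, a j ^ 4 := by
  induction m with
  | zero => simp [rademacherSum]
  | succ m ih =>
    have hpair (s : ℝ) : (a 0 + s) ^ 4 + (-a 0 + s) ^ 4
        = 2 * a 0 ^ 4 + 12 * a 0 ^ 2 * s ^ 2 + 2 * s ^ 4 := by ring
    simp only [sum_rademacherSum_succ (· ^ 4), hpair, sum_add_distrib, ← mul_sum, sum_const,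
      ih, sum_rademacherSum_sq, card_univ, Fintype.card_fun, Fintype.card_bool,
      Fintype.card_fin, nsmul_eq_mul, Fin.sum_univ_succ (fun j => a j ^ 2),
      Fin.sum_univ_succ (fun j => a j ^ 4), Fin.tail]
    push_cast
    ring

lemma sum_sq_pow_three_le {ι : Type*} (s : Finset ι) (f : ι → ℝ) :
    (∑ i ∈ s, f i ^ 2) ^ 3 ≤ (∑ i ∈ s, |f i|) ^ 2 * ∑ i ∈ s, f i ^ 4 := by
  set Q := ∑ i ∈ s, f i ^ 2
  have hQT : Q ^ 2 ≤ (∑ i ∈ s, |f i|) * ∑ i ∈ s, |f i| ^ 3 :=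
    sum_sq_le_sum_mul_sum_of_sq_le_mul s (fun _ _ => abs_nonneg _) (fun _ _ => by positivity)
      fun i _ => le_of_eq (by rw [← sq_abs (f i)]; ring)
  have hTR : (∑ i ∈ s, |f i| ^ 3) ^ 2 ≤ Q * ∑ i ∈ s, f i ^ 4 :=
    sum_sq_le_sum_mul_sum_of_sq_le_mul s (fun _ _ => by positivity) (fun _ _ => by positivity)
      fun i _ => le_of_eq (by rw [← pow_mul, show 3 * 2 = 2 * 3 from rfl, pow_mul, sq_abs]; ring)
  obtain hQ | hQ := (show 0 ≤ Q from sum_nonneg fun i _ => sq_nonneg (f i)).eq_or_lt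
  · rw [← hQ, zero_pow three_ne_zero]; positivity
  refine le_of_mul_le_mul_left ?_ hQ
  calc Q * Q ^ 3 = (Q ^ 2) ^ 2 := by ring
    _ ≤ ((∑ i ∈ s, |f i|) * ∑ i ∈ s, |f i| ^ 3) ^ 2 := by gcongr
    _ = (∑ i ∈ s, |f i|) ^ 2 * (∑ i ∈ s, |f i| ^ 3) ^ 2 := by ring
    _ ≤ (∑ i ∈ s, |f i|) ^ 2 * (Q * ∑ i ∈ s, f i ^ 4) := by gcongr
    _ = Q * ((∑ i ∈ s, |f i|) ^ 2 * ∑ i ∈ s, f i ^ 4) := by ring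

theorem khintchine_sqrt_sum_sq_le (m : ℕ) (a : Fin m → ℝ) :
    √(∑ j, a j ^ 2) ≤ √3 / 2 ^ m * ∑ ε, |rademacherSum ε a| := by
  set S := ∑ j, a j ^ 2
  set P := ∑ ε, |rademacherSum ε a|
  have hmoments := sum_sq_pow_three_le univ fun ε => rademacherSum ε a
  rw [sum_rademacherSum_sq, sum_rademacherSum_pow_four] at hmoments
  have hkey : (2 ^ m) ^ 2 * S ≤ 3 * P ^ 2 := by
    obtain hS | hS := (show 0 ≤ S from sum_nonneg fun j _ => sq_nonneg (a j)).eq_or_lt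
    · rw [← hS, mul_zero]; positivity
    refine le_of_mul_le_mul_right ?_ (by positivity : 0 < 2 ^ m * S ^ 2)
    calc (2 ^ m) ^ 2 * S * (2 ^ m * S ^ 2) = (2 ^ m * S) ^ 3 := by ring
      _ ≤ P ^ 2 * (3 * 2 ^ m * S ^ 2 - 2 * 2 ^ m * ∑ j, a j ^ 4) := hmoments
      _ ≤ P ^ 2 * (3 * 2 ^ m * S ^ 2) := by gcongr; exact sub_le_self _ (by positivity)
      _ = 3 * P ^ 2 * (2 ^ m * S ^ 2) := by ring
  rw [Real.sqrt_le_iff]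
  refine ⟨by positivity, ?_⟩
  rw [div_mul_eq_mul_div, div_pow, mul_pow, Real.sq_sqrt zero_le_three,
    le_div_iff₀ (by positivity)]
  linarith

theorem exists_eq_sum_smul_of_le_sum_mul_abs {ι V : Type*} [Fintype ι] [TopologicalSpace V]
    [AddCommGroup V] [Module ℝ V] [IsTopologicalAddGroup V] [ContinuousSMul ℝ V]
    [LocallyConvexSpace ℝ V] [T2Space V] {v : ι → V} {c : ι → ℝ} (hc : ∀ k, 0 ≤ c k) {u : V}
    (h : ∀ f : StrongDual ℝ V, f u ≤ ∑ k, c k * |f (v k)|) :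
    ∃ a : ι → ℝ, (∀ k, |a k| ≤ c k) ∧ u = ∑ k, a k • v k := by
  let L := Fintype.linearCombination ℝ v
  let box : Set (ι → ℝ) := Set.univ.pi fun k => Set.Icc (-c k) (c k)
  have hbox : IsCompact (L '' box) :=
    (isCompact_univ_pi fun k => isCompact_Icc).image L.continuous_of_finiteDimensional
  suffices hu : u ∈ L '' box by
    obtain ⟨a, ha, rfl⟩ := hu
    exact ⟨a, fun k => abs_le.mpr (ha k (Set.mem_univ k)),
      Fintype.linearCombination_apply ℝ v a⟩
  by_contra hu
  obtain ⟨f, s, hfu, hfs⟩ := geometric_hahn_banach_point_closed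
    ((convex_pi fun k _ => convex_Icc _ _).linear_image L) hbox.isClosed hu
  -- the point of the box minimizing `f ∘ L`
  let a : ι → ℝ := fun k => if 0 ≤ f (v k) then -c k else c k
  have ha : a ∈ box := fun k _ => by
    simp only [a]; split_ifs <;> constructor <;> linarith [hc k]
  have hfa : f (L a) = -∑ k, c k * |f (v k)| := by
    simp only [L, Fintype.linearCombination_apply, map_sum, map_smul, smul_eq_mul, a,
      ← sum_neg_distrib]
    refine sum_congr rfl fun k _ => ?_
    split_ifs with hk
    · rw [abs_of_nonneg hk]; ring
    · rw [abs_of_neg (not_le.mp hk)]; ring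
  have := h (-f)
  simp only [neg_apply, abs_neg] at this
  linarith [hfs _ ⟨a, ha, rfl⟩]

theorem sum_abs_le_of_forall_signs {X κ : Type*} [Lattice X] [AddCommGroup X]
    [IsOrderedAddMonoid X] [Fintype κ] (y : κ → X) (z : X)
    (h : ∀ σ : κ → Bool, ∑ i, (if σ i then y i else -y i) ≤ z) : ∑ i, |y i| ≤ z := by
  classical
  suffices ∀ (s : Finset κ) (z : X),
      (∀ σ : κ → Bool, ∑ i ∈ s, (if σ i then y i else -y i) ≤ z) → ∑ i ∈ s, |y i| ≤ z from
    this univ z h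
  intro s
  induction s using Finset.induction_on with
  | empty => intro z h; simpa using h fun _ => true
  | insert a s ha ih =>
    intro z h
    have hs : ∀ σ : κ → Bool, ∑ i ∈ s, (if σ i then y i else -y i) ≤ z - |y a| := by
      intro σ
      have hupdate (b : Bool) : ∑ i ∈ s, (if Function.update σ a b i then y i else -y i)
          = ∑ i ∈ s, (if σ i then y i else -y i) :=
        sum_congr rfl fun i hi => by rw [Function.update_of_ne (ne_of_mem_of_not_mem hi ha)]
      have hsum (b : Bool) := h (Function.update σ a b)
      simp only [sum_insert ha, Function.update_self, hupdate] at hsum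
      rw [le_sub_comm, abs_le']
      exact ⟨le_sub_iff_add_le.mpr (hsum true), le_sub_iff_add_le.mpr (hsum false)⟩
    rw [sum_insert ha, ← le_sub_iff_add_le']
    exact ih _ hs

section LatticeOrderedModule

variable {X : Type*} [Lattice X] [AddCommGroup X] [Module ℝ X] [PosSMulMono ℝ X]

theorem smul_le_abs_smul_abs (r : ℝ) (y : X) : r • y ≤ |r| • |y| := by
  rcases le_or_gt 0 r with hr | hr
  · rw [abs_of_nonneg hr]
    exact smul_le_smul_of_nonneg_left (le_abs_self y) hr
  · rw [abs_of_neg hr, ← neg_smul_neg]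
    exact smul_le_smul_of_nonneg_left (neg_le_abs y) (neg_nonneg.mpr hr.le)

theorem abs_smul_le (r : ℝ) (y : X) : |r • y| ≤ |r| • |y| := by
  refine abs_le'.mpr ⟨smul_le_abs_smul_abs r y, ?_⟩
  simpa using smul_le_abs_smul_abs (-r) y

variable [IsOrderedAddMonoid X]

theorem abs_smul_eq (r : ℝ) (y : X) : |r • y| = |r| • |y| := by
  refine (abs_smul_le r y).antisymm ?_
  rcases eq_or_ne r 0 with rfl | hr
  · simp
  calc |r| • |y| = |r| • |r⁻¹ • r • y| := by rw [inv_smul_smul₀ hr]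
    _ ≤ |r| • |r⁻¹| • |r • y| := smul_le_smul_of_nonneg_left (abs_smul_le _ _) (abs_nonneg r)
    _ = |r • y| := by rw [smul_smul, abs_inv, mul_inv_cancel₀ (abs_ne_zero.mpr hr), one_smul]

theorem sum_abs_smul_le_of_forall_real {κ ι : Type*} [Fintype κ] [Fintype ι] {lam : κ → ℝ}
    {w : ι → κ → ℝ} {c : ι → ℝ} (hc : ∀ k, 0 ≤ c k)
    (h : ∀ t : κ → ℝ, ∑ i, |lam i * t i| ≤ ∑ k, c k * |∑ j, w k j * t j|) (x : κ → X) :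
    ∑ i, |lam i • x i| ≤ ∑ k, c k • |∑ j, w k j • x j| := by
  classical
  refine sum_abs_le_of_forall_signs _ _ fun σ => ?_
  have hdom (f : StrongDual ℝ (κ → ℝ)) :
      f (fun i => boolSign (σ i) * lam i) ≤ ∑ k, c k * |f (w k)| := by
    obtain ⟨t, hf⟩ : ∃ t : κ → ℝ, ∀ z, f z = ∑ j, z j * t j :=
      ⟨_, f.toLinearMap.pi_apply_eq_sum_univ⟩
    simp only [hf]
    refine le_trans ?_ (h t)
    refine sum_le_sum fun i _ => le_trans (le_abs_self _) (le_of_eq ?_)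
    rw [abs_mul, abs_mul, abs_mul, abs_boolSign, one_mul]
  obtain ⟨a, ha, hsum⟩ := exists_eq_sum_smul_of_le_sum_mul_abs hc hdom
  have hcoef (i : κ) : boolSign (σ i) * lam i = ∑ k, a k * w k i := by
    simpa using congrFun hsum i
  calc ∑ i, (if σ i then lam i • x i else -(lam i • x i))
      = ∑ i, (boolSign (σ i) * lam i) • x i := by simp [mul_smul, boolSign_smul]
    _ = ∑ k, a k • ∑ j, w k j • x j := by
      simp only [hcoef, sum_smul, mul_smul, smul_sum]
      exact sum_comm
    _ ≤ ∑ k, c k • |∑ j, w k j • x j| := by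
      refine sum_le_sum fun k _ => (smul_le_abs_smul_abs _ _).trans ?_
      exact smul_le_smul_of_nonneg_right (ha k) (abs_nonneg _)

theorem sum_abs_smul_le_khintchine {m : ℕ} {lam β μ : Fin m → ℝ}
    (hlam : ∀ i, |lam i| = β i * μ i) (x : Fin m → X) :
    ∑ i, |lam i • x i| ≤ (√3 * √(∑ i, β i ^ 2) / 2 ^ m) •
      ∑ ε : Fin m → Bool, |∑ j, (boolSign (ε j) * μ j) • x j| := by
  rw [smul_sum]
  refine sum_abs_smul_le_of_forall_real (fun _ => by positivity) (fun t => ?_) x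
  have hsplit (i : Fin m) : |lam i * t i| = |β i| * |μ i * t i| := by
    have hβμ : 0 ≤ β i * μ i := hlam i ▸ abs_nonneg (lam i)
    rw [abs_mul, hlam, abs_mul, ← mul_assoc, ← abs_mul, abs_of_nonneg hβμ]
  calc ∑ i, |lam i * t i| = ∑ i, |β i| * |μ i * t i| := sum_congr rfl fun i _ => hsplit i
    _ ≤ √(∑ i, |β i| ^ 2) * √(∑ i, |μ i * t i| ^ 2) := Real.sum_mul_le_sqrt_mul_sqrt _ _ _
    _ = √(∑ i, β i ^ 2) * √(∑ i, (μ i * t i) ^ 2) := by simp only [sq_abs]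
    _ ≤ √(∑ i, β i ^ 2) * (√3 / 2 ^ m * ∑ ε, |rademacherSum ε fun j => μ j * t j|) := by
      gcongr; exact khintchine_sqrt_sum_sq_le m _
    _ = ∑ ε : Fin m → Bool, √3 * √(∑ i, β i ^ 2) / 2 ^ m
          * |∑ j, boolSign (ε j) * μ j * t j| := by
      simp only [rademacherSum, mul_sum, mul_assoc]
      refine sum_congr rfl fun ε _ => ?_
      ring

end LatticeOrderedModule

theorem div_two_pow_smul_nonneg {X : Type*} [Lattice X] [AddCommGroup X]
    [IsOrderedAddMonoid X] [Module ℝ X] {x : X} (hx : 0 ≤ x) (k j : ℕ) :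
    0 ≤ ((k : ℝ) / 2 ^ j) • x := by
  induction j with
  | zero => simpa only [pow_zero, div_one, Nat.cast_smul_eq_nsmul] using nsmul_nonneg hx k
  | succ j ih =>
    refine nsmul_two_semiclosed ?_
    rwa [← Nat.cast_smul_eq_nsmul ℝ, smul_smul, pow_succ, Nat.cast_ofNat,
      mul_div_assoc', mul_comm 2, mul_div_mul_right _ _ two_ne_zero]

section NormedLattice

variable {X : Type*} [NormedAddCommGroup X] [Lattice X] [HasSolidNorm X] [IsOrderedAddMonoid X]
  [NormedSpace ℝ X]

/-- The positive cone of a normed lattice is closed and stable under halving, hence under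
multiplication by nonnegative dyadic rationals, and therefore by all nonnegative reals. -/
instance HasSolidNorm.posSMulMono : PosSMulMono ℝ X := by
  refine .of_smul_nonneg fun r hr x hx => ?_
  have hdyadic : Filter.Tendsto (fun j : ℕ => ((⌊r * 2 ^ j⌋₊ : ℝ) / 2 ^ j) • x) Filter.atTop
      (nhds (r • x)) :=
    ((tendsto_nat_floor_mul_div_atTop hr).comp
      (tendsto_pow_atTop_atTop_of_one_lt one_lt_two)).smul_const x
  exact ge_of_tendsto' hdyadic fun j => div_two_pow_smul_nonneg hx _ j

theorem norm_sum_smul_abs_le_khintchine {m : ℕ} {lam β μ : Fin m → ℝ}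
    (hlam : ∀ i, |lam i| = β i * μ i) (x : Fin m → X) {M : ℝ}
    (hM : ∀ ε : Fin m → Bool, ‖∑ j, (boolSign (ε j) * μ j) • x j‖ ≤ M) :
    ‖∑ i, lam i • |x i|‖ ≤ √3 * √(∑ i, β i ^ 2) * M := by
  have habs : |∑ i, lam i • (|x i|)| ≤ ∑ i, |lam i • x i| := by
    refine (le_sum_of_subadditive _ abs_zero.le abs_add_le _ _).trans_eq ?_
    simp only [abs_smul_eq, abs_abs]
  set c := √3 * √(∑ i, β i ^ 2) / 2 ^ m with hc
  set y : (Fin m → Bool) → X := fun ε => ∑ j, (boolSign (ε j) * μ j) • x j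
  calc ‖∑ i, lam i • |x i|‖ ≤ ‖c • ∑ ε, |y ε|‖ :=
        norm_le_norm_of_abs_le_abs <|
          habs.trans <| (sum_abs_smul_le_khintchine hlam x).trans (le_abs_self _)
    _ ≤ c * ∑ ε, ‖y ε‖ := by
      rw [norm_smul, Real.norm_of_nonneg (by positivity)]
      gcongr
      exact (norm_sum_le _ _).trans_eq (by simp only [norm_abs_eq_norm])
    _ ≤ c * ∑ _ε : Fin m → Bool, M := by gcongr; exact hM _
    _ = √3 * √(∑ i, β i ^ 2) * M := by
      rw [hc]
      simp only [sum_const, card_univ, Fintype.card_fun, Fintype.card_bool, Fintype.card_fin,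
        nsmul_eq_mul, Nat.cast_pow, Nat.cast_ofNat]
      field_simp

end NormedLattice

theorem abs_of_lp_sequence_upper_estimate_general (p r : ℝ) (hp : 2 < p) (hr : 1 / r = 1 / 2 + 1 / p)
    (X : Type) [NormedAddCommGroup X] [Lattice X] [HasSolidNorm X]
    [IsOrderedAddMonoid X] [NormedSpace ℝ X]
    (x : ℕ → X) (C : ℝ) (hC : 0 < C)
    (hupp : ∀ (m : ℕ) (lam : Fin m → ℝ),
      ‖∑ i, lam i • x (i : ℕ)‖ ≤ C * (∑ i, |lam i| ^ p) ^ (1 / p)) :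
    ∃ K : ℝ, 0 < K ∧ ∀ (m : ℕ) (lam : Fin m → ℝ),
      ‖∑ i, lam i • |x (i : ℕ)|‖ ≤ K * (∑ i, |lam i| ^ r) ^ (1 / r) := by
  have hp0 : 0 < p := by linarith
  have hr0 : 0 < r := one_div_pos.mp (hr ▸ by positivity)
  have hexp : r / 2 + r / p = 1 := by
    field_simp at hr ⊢
    linarith
  refine ⟨√3 * C, by positivity, fun m lam => ?_⟩
  set A := ∑ i, |lam i| ^ r
  have hsplit (i : Fin m) : |lam i| = |lam i| ^ (r / 2) * |lam i| ^ (r / p) := by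
    rw [← Real.rpow_add' (abs_nonneg _) (by rw [hexp]; exact one_ne_zero), hexp, Real.rpow_one]
  have hsq (i : Fin m) : (|lam i| ^ (r / 2)) ^ 2 = |lam i| ^ r := by
    rw [← Real.rpow_natCast, ← Real.rpow_mul (abs_nonneg _)]
    norm_num
  have hsigned (ε : Fin m → Bool) :
      ‖∑ j, (boolSign (ε j) * |lam j| ^ (r / p)) • x j‖ ≤ C * A ^ (1 / p) := by
    refine (hupp m _).trans_eq ?_
    simp only [abs_mul, abs_boolSign, one_mul, abs_abs, Real.abs_rpow_of_nonneg (abs_nonneg _),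
      ← Real.rpow_mul (abs_nonneg _), div_mul_cancel₀ r hp0.ne', A]
  calc ‖∑ i, lam i • |x i|‖
      ≤ √3 * √(∑ i, (|lam i| ^ (r / 2)) ^ 2) * (C * A ^ (1 / p)) :=
        norm_sum_smul_abs_le_khintchine hsplit (fun i => x i) hsigned
    _ = √3 * C * A ^ (1 / r) := by
      rw [hr, Real.rpow_add' (sum_nonneg fun i _ => by positivity) (by positivity),
        ← Real.sqrt_eq_rpow, sum_congr rfl fun i _ => hsq i]
      ring

/-- **Upper ℓ_r-estimate for moduli of ℓ_p-sequences (2 < p < ∞).** If `(x_n)` is a sequence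
in a Banach lattice `X` equivalent to the canonical basis of `ℓ_p`, then the sequence of
absolute values `(|x_n|)` satisfies an upper `ℓ_r`-estimate, where `1/r = 1/2 + 1/p`. -/
theorem abs_of_lp_sequence_upper_estimate (p r : ℝ) (hp : 2 < p) (hr : 1 / r = 1 / 2 + 1 / p)
    (X : Type) [NormedAddCommGroup X] [Lattice X] [HasSolidNorm X]
    [IsOrderedAddMonoid X] [NormedSpace ℝ X] [CompleteSpace X]
    (x : ℕ → X) (c C : ℝ) (hc : 0 < c) (hC : 0 < C)
    (hlow : ∀ (m : ℕ) (lam : Fin m → ℝ),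
      c * (∑ i, |lam i| ^ p) ^ (1 / p) ≤ ‖∑ i, lam i • x (i : ℕ)‖)
    (hupp : ∀ (m : ℕ) (lam : Fin m → ℝ),
      ‖∑ i, lam i • x (i : ℕ)‖ ≤ C * (∑ i, |lam i| ^ p) ^ (1 / p)) :
    ∃ K : ℝ, 0 < K ∧ ∀ (m : ℕ) (lam : Fin m → ℝ),
      ‖∑ i, lam i • |x (i : ℕ)|‖ ≤ K * (∑ i, |lam i| ^ r) ^ (1 / r) :=
  abs_of_lp_sequence_upper_estimate_general p r hp hr X x C hC hupp
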